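/- arXiv:1808.09305 — 3 statements merged into one kernel-verified Lean document; each statement's English description precedes it below -/
import Mathlib

section
/- Let U ⊆ ℝ^N be open, 1 ≤ p < ∞, and 0 < s < 1. There exists a constant c = c(N, s, p) > 0 with the following property: whenever f ∈ L¹_loc(U), B(x,r) ⊆ U, and E ⊆ B(x,r) is a Lebesgue measurable set of positive Lebesgue measure, then ∫_{B(x,r)} |f(y) − f_E|^p dy ≤ c (r^{sp+N} / 𝓛^N(E)) ∫_{B(x,r)} ∫_E |f(y) − f(z)|^p / |y − z|^{sp+N} dz dy, where f_E = (1/𝓛^N(E)) ∫_E f(z) dz. -/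
open MeasureTheory Metric
open scoped ENNReal

/-!
Jensen's inequality gives `|f y - f_E|^p ≤ ⨍_E |f y - f z|^p dz`, and for `y ∈ B(x,r)`, `z ∈ E`
we have `|y - z| ≤ 2r`, so `|f y - f z|^p ≤ (2r)^(sp+N) |f y - f z|^p / |y - z|^(sp+N)`; this gives
the inequality with `c = 2^(sp+N)`. The one subtlety is that `f` need not be integrable on `E`,
which may reach the boundary of `U`. When the right-hand side is finite, however, the inner integral
is finite for some `y₀ ∈ B(x,r)`, which puts `f - f y₀` in `Lᵖ(E) ⊆ L¹(E)`.
-/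

theorem ofReal_le_ofReal_rpow_mul_ofReal_div_rpow {t d D A : ℝ} (ht : 0 ≤ t)
    (htd : d = 0 → t = 0) (hd : 0 ≤ d) (hdD : d ≤ D) (hA : 0 ≤ A) :
    ENNReal.ofReal t ≤ ENNReal.ofReal (D ^ A) * ENNReal.ofReal (t / d ^ A) := by
  rcases hd.eq_or_lt with rfl | hd
  · simp [htd rfl]
  rw [← ENNReal.ofReal_mul (Real.rpow_nonneg (hd.le.trans hdD) A)]
  apply ENNReal.ofReal_le_ofReal
  have hdA : 0 < d ^ A := Real.rpow_pos_of_pos hd A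
  calc t = d ^ A * (t / d ^ A) := by field_simp
    _ ≤ D ^ A * (t / d ^ A) := by gcongr

section Averages

variable {α : Type*} [MeasurableSpace α] {μ : Measure α} {p : ℝ}

theorem rpow_lintegral_le_measure_univ_rpow_mul_lintegral_rpow (hp : 1 ≤ p) {G : α → ℝ≥0∞}
    (hG : AEMeasurable G μ) :
    (∫⁻ a, G a ∂μ) ^ p ≤ μ Set.univ ^ (p - 1) * ∫⁻ a, G a ^ p ∂μ := by
  rcases hp.eq_or_lt with rfl | hp
  · simp
  have hpq := Real.HolderConjugate.conjExponent hp
  have holder := ENNReal.lintegral_mul_le_Lp_mul_Lq μ hpq hG aemeasurable_const (g := 1)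
  simp only [Pi.mul_apply, Pi.one_apply, mul_one, ENNReal.one_rpow, lintegral_one] at holder
  calc (∫⁻ a, G a ∂μ) ^ p
      ≤ ((∫⁻ a, G a ^ p ∂μ) ^ (1 / p) * μ Set.univ ^ (1 / p.conjExponent)) ^ p := by
        gcongr
    _ = μ Set.univ ^ (p - 1) * ∫⁻ a, G a ^ p ∂μ := by
        rw [ENNReal.mul_rpow_of_nonneg _ _ (by linarith), ← ENNReal.rpow_mul, ← ENNReal.rpow_mul,
          one_div_mul_cancel (by linarith), Real.conjExponent, one_div_div,
          div_mul_cancel₀ _ (by linarith), ENNReal.rpow_one, mul_comm]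

theorem ofReal_abs_integral_div_rpow_le (hp : 1 ≤ p) (hμ0 : μ Set.univ ≠ 0)
    (hμ : μ Set.univ ≠ ⊤) {g : α → ℝ} (hg : AEStronglyMeasurable g μ) :
    ENNReal.ofReal (|(∫ a, g a ∂μ) / (μ Set.univ).toReal| ^ p)
      ≤ (μ Set.univ)⁻¹ * ∫⁻ a, ENNReal.ofReal (|g a| ^ p) ∂μ := by
  have hp0 : 0 ≤ p := by linarith
  have hM : 0 < (μ Set.univ).toReal := ENNReal.toReal_pos hμ0 hμ
  have hmean : ENNReal.ofReal |(∫ a, g a ∂μ) / (μ Set.univ).toReal|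
      ≤ (∫⁻ a, ENNReal.ofReal |g a| ∂μ) / μ Set.univ := by
    rw [abs_div, abs_of_pos hM, ENNReal.ofReal_div_of_pos hM, ENNReal.ofReal_toReal hμ]
    gcongr
    simpa only [← Real.enorm_eq_ofReal_abs] using enorm_integral_le_lintegral_enorm g
  calc ENNReal.ofReal (|(∫ a, g a ∂μ) / (μ Set.univ).toReal| ^ p)
      = ENNReal.ofReal |(∫ a, g a ∂μ) / (μ Set.univ).toReal| ^ p :=
        (ENNReal.ofReal_rpow_of_nonneg (abs_nonneg _) hp0).symm
    _ ≤ (∫⁻ a, ENNReal.ofReal |g a| ∂μ) ^ p / μ Set.univ ^ p := by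
        rw [← ENNReal.div_rpow_of_nonneg _ _ hp0]
        gcongr
    _ ≤ μ Set.univ ^ (p - 1) * (∫⁻ a, ENNReal.ofReal |g a| ^ p ∂μ) / μ Set.univ ^ p := by
        gcongr
        exact rpow_lintegral_le_measure_univ_rpow_mul_lintegral_rpow hp
          hg.aemeasurable.abs.ennreal_ofReal
    _ = (μ Set.univ)⁻¹ * ∫⁻ a, ENNReal.ofReal (|g a| ^ p) ∂μ := by
        simp only [ENNReal.ofReal_rpow_of_nonneg (abs_nonneg _) hp0]
        rw [div_eq_mul_inv, ← ENNReal.rpow_neg, mul_comm, ← mul_assoc,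
          ← ENNReal.rpow_add _ _ hμ0 hμ, show -p + (p - 1) = -1 by ring, ENNReal.rpow_neg_one]

theorem lintegral_rpow_sub_setIntegral_div_le (hp : 1 ≤ p) {E : Set α} (hE0 : μ E ≠ 0)
    (hE : μ E ≠ ⊤) {f : α → ℝ} (hf : IntegrableOn f E μ) (ν : Measure α) :
    ∫⁻ y, ENNReal.ofReal (|f y - (∫ z in E, f z ∂μ) / (μ E).toReal| ^ p) ∂ν
      ≤ (μ E)⁻¹ * ∫⁻ y, ∫⁻ z in E, ENNReal.ofReal (|f y - f z| ^ p) ∂μ ∂ν := by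
  rw [← lintegral_const_mul' _ _ (ENNReal.inv_ne_top.mpr hE0)]
  refine lintegral_mono fun y => ?_
  have hfy : IntegrableOn (fun z => f y - f z) E μ := (integrableOn_const hE).sub hf
  have hmean : f y - (∫ z in E, f z ∂μ) / (μ E).toReal
      = (∫ z in E, (f y - f z) ∂μ) / (μ E).toReal := by
    rw [integral_sub (integrableOn_const (C := f y) hE) hf, setIntegral_const, smul_eq_mul,
      measureReal_def, sub_div, mul_div_cancel_left₀ _ (ENNReal.toReal_pos hE0 hE).ne']
  rw [hmean]
  simpa only [Measure.restrict_apply_univ] using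
    ofReal_abs_integral_div_rpow_le (μ := μ.restrict E) hp (by simpa using hE0) (by simpa using hE)
      hfy.aestronglyMeasurable

theorem exists_mem_ne_top_of_setLIntegral_ne_top {s : Set α} (hs : MeasurableSet s)
    (hμs : μ s ≠ 0) {F : α → ℝ≥0∞} (hF : ∫⁻ y in s, F y ∂μ ≠ ⊤) : ∃ y ∈ s, F y ≠ ⊤ := by
  by_contra! h
  rw [setLIntegral_congr_fun hs h, setLIntegral_const, ENNReal.top_mul hμs] at hF
  exact hF rfl

theorem integrableOn_of_setLIntegral_rpow_sub_ne_top (hp : 1 ≤ p) {E : Set α} (hE : μ E ≠ ⊤)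
    {f : α → ℝ} (hf : AEStronglyMeasurable f (μ.restrict E)) {c : ℝ}
    (hc : ∫⁻ z in E, ENNReal.ofReal (|c - f z| ^ p) ∂μ ≠ ⊤) : IntegrableOn f E μ := by
  have : IsFiniteMeasure (μ.restrict E) := ⟨by simpa using hE.lt_top⟩
  have hmem : MemLp (fun z => c - f z) (ENNReal.ofReal p) (μ.restrict E) := by
    refine ⟨aestronglyMeasurable_const.sub hf, ?_⟩
    rw [eLpNorm_lt_top_iff_lintegral_rpow_enorm_lt_top (ENNReal.ofReal_pos.mpr (by linarith)).ne'
      ENNReal.ofReal_ne_top,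
      ENNReal.toReal_ofReal (by linarith)]
    simpa only [Real.enorm_eq_ofReal_abs, ENNReal.ofReal_rpow_of_nonneg (abs_nonneg _)
      (by linarith : 0 ≤ p)] using hc.lt_top
  simpa only [IntegrableOn, Pi.sub_def, sub_sub_cancel] using
    (integrable_const c).sub (hmem.integrable (by simpa using hp))

end Averages

section Kernel

variable {α : Type*} [MetricSpace α] [MeasurableSpace α] {p A D : ℝ} {f : α → ℝ} {E : Set α}

theorem setLIntegral_rpow_le_mul_setLIntegral_div_dist_rpow (hp : 0 < p) (hA : 0 ≤ A)
    (μ : Measure α) {y : α} (hD : ∀ z ∈ E, dist y z ≤ D) (hE : MeasurableSet E) :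
    ∫⁻ z in E, ENNReal.ofReal (|f y - f z| ^ p) ∂μ
      ≤ ENNReal.ofReal (D ^ A) *
        ∫⁻ z in E, ENNReal.ofReal (|f y - f z| ^ p / dist y z ^ A) ∂μ := by
  rw [← lintegral_const_mul' _ _ ENNReal.ofReal_ne_top]
  refine setLIntegral_mono' hE fun z hz => ?_
  refine ofReal_le_ofReal_rpow_mul_ofReal_div_rpow (by positivity) (fun hyz => ?_) dist_nonneg
    (hD z hz) hA
  simp [dist_eq_zero.mp hyz, Real.zero_rpow hp.ne']

theorem setLIntegral_setLIntegral_rpow_le_mul (hp : 0 < p) (hA : 0 ≤ A) (μ ν : Measure α)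
    {B : Set α} (hB : MeasurableSet B) (hD : ∀ y ∈ B, ∀ z ∈ E, dist y z ≤ D)
    (hE : MeasurableSet E) :
    ∫⁻ y in B, ∫⁻ z in E, ENNReal.ofReal (|f y - f z| ^ p) ∂μ ∂ν
      ≤ ENNReal.ofReal (D ^ A) *
        ∫⁻ y in B, ∫⁻ z in E, ENNReal.ofReal (|f y - f z| ^ p / dist y z ^ A) ∂μ ∂ν := by
  rw [← lintegral_const_mul' _ _ ENNReal.ofReal_ne_top]
  exact setLIntegral_mono' hB fun y hy =>
    setLIntegral_rpow_le_mul_setLIntegral_div_dist_rpow hp hA μ (hD y hy) hE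

end Kernel

theorem statement6_general (N : ℕ) (p s : ℝ) (hp : 1 ≤ p) (hs0 : 0 < s) :
    ∃ c : ℝ, 0 < c ∧
      ∀ (U : Set (EuclideanSpace ℝ (Fin N))), IsOpen U →
      ∀ f : EuclideanSpace ℝ (Fin N) → ℝ, LocallyIntegrableOn f U →
      ∀ (x : EuclideanSpace ℝ (Fin N)) (r : ℝ), Metric.ball x r ⊆ U →
      ∀ E : Set (EuclideanSpace ℝ (Fin N)), E ⊆ Metric.ball x r →
        MeasurableSet E → 0 < volume E →
        (∫⁻ y in Metric.ball x r,
            ENNReal.ofReal (|f y - (∫ z in E, f z) / (volume E).toReal| ^ p))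
          ≤ ENNReal.ofReal c * (ENNReal.ofReal (r ^ (s * p + N)) / volume E) *
            ∫⁻ y in Metric.ball x r, ∫⁻ z in E,
              ENNReal.ofReal (|f y - f z| ^ p / dist y z ^ (s * p + N)) := by
  have hp0 : 0 < p := by linarith
  have hA : 0 ≤ s * p + N := by positivity
  refine ⟨2 ^ (s * p + N), by positivity, fun U _ f hf x r hBU E hEB hE hE0 => ?_⟩
  obtain ⟨z₀, hz₀⟩ := nonempty_of_measure_ne_zero hE0.ne'
  have hr : 0 < r := pos_of_mem_ball (hEB hz₀)
  have hEt : volume E ≠ ⊤ := ((measure_mono hEB).trans_lt measure_ball_lt_top).ne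
  have hdist : ∀ y ∈ ball x r, ∀ z ∈ E, dist y z ≤ 2 * r := fun y hy z hz => by
    linarith [dist_triangle_right y z x, mem_ball.mp hy, mem_ball.mp (hEB hz)]
  set I := ∫⁻ y in ball x r, ∫⁻ z in E, ENNReal.ofReal (|f y - f z| ^ p / dist y z ^ (s * p + N))
  rcases eq_or_ne I ⊤ with hI | hI
  · rw [hI, ENNReal.mul_top (by simp [hEt, hr, Real.rpow_pos_of_pos])]
    exact le_top
  obtain ⟨y₀, hy₀, hy₀I⟩ := exists_mem_ne_top_of_setLIntegral_ne_top measurableSet_ball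
    (fun hB => hE0.ne' (measure_mono_null hEB hB)) hI
  have hfE : IntegrableOn f E := integrableOn_of_setLIntegral_rpow_sub_ne_top hp hEt
    (hf.aestronglyMeasurable.mono_measure (Measure.restrict_mono (hEB.trans hBU) le_rfl))
    (c := f y₀) (ne_top_of_le_ne_top (ENNReal.mul_ne_top ENNReal.ofReal_ne_top hy₀I)
      (setLIntegral_rpow_le_mul_setLIntegral_div_dist_rpow hp0 hA volume (hdist y₀ hy₀) hE))
  calc _ ≤ (volume E)⁻¹ * ∫⁻ y in ball x r, ∫⁻ z in E, ENNReal.ofReal (|f y - f z| ^ p) :=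
        lintegral_rpow_sub_setIntegral_div_le hp hE0.ne' hEt hfE _
    _ ≤ (volume E)⁻¹ * (ENNReal.ofReal ((2 * r) ^ (s * p + N)) * I) := by
        gcongr
        exact setLIntegral_setLIntegral_rpow_le_mul hp0 hA volume volume measurableSet_ball hdist
          hE
    _ = _ := by
        rw [Real.mul_rpow zero_le_two hr.le, ENNReal.ofReal_mul (by positivity), div_eq_mul_inv]
        ring

/-- Let `U ⊆ ℝ^N` be open, `1 ≤ p < ∞`, `0 < s < 1`.  There is a
constant `c = c(N,s,p) > 0` such that whenever `f ∈ L¹_loc(U)`, `B(x,r) ⊆ U`, and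
`E ⊆ B(x,r)` is Lebesgue measurable with `𝓛^N(E) > 0`, then
`∫_{B(x,r)} |f(y) - f_E|^p dy
  ≤ c (r^{sp+N}/𝓛^N(E)) ∫_{B(x,r)} ∫_E |f(y)-f(z)|^p / |y-z|^{sp+N} dz dy`,
where `f_E` is the average of `f` over `E`. -/
theorem statement6 (N : ℕ) (p s : ℝ) (hp : 1 ≤ p) (hs0 : 0 < s) (hs1 : s < 1) :
    ∃ c : ℝ, 0 < c ∧
      ∀ (U : Set (EuclideanSpace ℝ (Fin N))), IsOpen U →
      ∀ f : EuclideanSpace ℝ (Fin N) → ℝ, LocallyIntegrableOn f U →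
      ∀ (x : EuclideanSpace ℝ (Fin N)) (r : ℝ), Metric.ball x r ⊆ U →
      ∀ E : Set (EuclideanSpace ℝ (Fin N)), E ⊆ Metric.ball x r →
        MeasurableSet E → 0 < volume E →
        (∫⁻ y in Metric.ball x r,
            ENNReal.ofReal (|f y - (∫ z in E, f z) / (volume E).toReal| ^ p))
          ≤ ENNReal.ofReal c * (ENNReal.ofReal (r ^ (s * p + N)) / volume E) *
            ∫⁻ y in Metric.ball x r, ∫⁻ z in E,
              ENNReal.ofReal (|f y - f z| ^ p / dist y z ^ (s * p + N)) :=
  statement6_general N p s hp hs0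
end

section
/- Let U ⊆ ℝ^N be open and connected, 1 ≤ p < ∞, 0 < s < 1, and let σ : U → (0,∞] be a screening function. Suppose there exist points x_1, …, x_m ∈ U and radii r_1, …, r_m > 0 such that for each n: 0 < r_n < σ(x_n), B(x_n, 2r_n) ⊆ U, 2r_n < σ(y) for all y ∈ B(x_n, r_n), and U = ⋃_{n=1}^m B(x_n, r_n). Then for every Lebesgue measurable set E ⊆ U with 𝓛^N(E) > 0 there exists a constant c = c(U, E, p, s) > 0 such that ‖f − f_E‖_{L^p(U)} ≤ c |f|_{W̃^{s,p}_{(σ)}(U)} for all f ∈ L¹_loc(U), where f_E = (1/𝓛^N(E)) ∫_E f(x) dx. -/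
/-
On each ball `B_n` the oscillation `∫_{B_n} |f - f_{B_n}|^p` is bounded, by Jensen's inequality,
by `|B_n|⁻¹ ∫_{B_n} ∫_{B_n} |f(z) - f(y)|^p`; as `B_n` has diameter `< 2 r_n < σ` on `B_n`, all
pairs of points of `B_n` are seen by the screened kernel, which is `≥ (2 r_n)^{-(sp+N)}` there.
Connectedness of `U` makes the overlap graph of the balls connected, so the averages over any two
balls differ by a controlled amount (compare both with `f` on the overlap, along a chain), and
finally `f_E` is within a controlled distance of any constant that approximates `f` on `U`.
-/

open MeasureTheory Metric
open scoped ENNReal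

/-- The screened homogeneous fractional Sobolev seminorm
`|f|_{W̃^{s,p}_{(σ)}(U)} = (∫_U ∫_{B(x,σ(x)) ∩ U} |f(y)-f(x)|^p / |y-x|^{sp+N} dy dx)^{1/p}`
of a function `f : ℝ^N → ℝ`, valued in `ℝ≥0∞`. -/
noncomputable def screenedSeminorm (N : ℕ) (s p : ℝ)
    (U : Set (EuclideanSpace ℝ (Fin N))) (σ : EuclideanSpace ℝ (Fin N) → ℝ≥0∞)
    (f : EuclideanSpace ℝ (Fin N) → ℝ) : ℝ≥0∞ :=
  (∫⁻ x in U, ∫⁻ y in U ∩ {y | edist y x < σ x},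
      ENNReal.ofReal (|f y - f x| ^ p / dist y x ^ (s * p + N))) ^ (1 / p)

open Set

theorem edist_rpow_le_two_rpow_mul {E : Type*} [PseudoEMetricSpace E] {p : ℝ} (hp : 1 ≤ p)
    (a b c : E) : edist a c ^ p ≤ 2 ^ (p - 1) * (edist a b ^ p + edist b c ^ p) :=
  (ENNReal.rpow_le_rpow (edist_triangle a b c) (zero_le_one.trans hp)).trans
    (ENNReal.rpow_add_le_mul_rpow_add_rpow _ _ hp)

section Average

variable {α E : Type*} [MeasurableSpace α] {μ : Measure α} {p : ℝ}
  [NormedAddCommGroup E] [NormedSpace ℝ E]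

theorem laverage_rpow_le (hp : 1 ≤ p) {g : α → ℝ≥0∞} (hg : AEMeasurable g μ) :
    (⨍⁻ x, g x ∂μ) ^ p ≤ ⨍⁻ x, g x ^ p ∂μ := by
  have hp0 : 0 < p := zero_lt_one.trans_le hp
  rcases eq_or_ne μ 0 with rfl | hμ0
  · simp [laverage_zero_measure, ENNReal.zero_rpow_of_pos hp0]
  rcases eq_or_ne (μ univ) ∞ with hμ | hμ
  · simp [laverage_eq', hμ, ENNReal.zero_rpow_of_pos hp0]
  have : IsFiniteMeasure μ := ⟨hμ.lt_top⟩
  have : NeZero μ := ⟨hμ0⟩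
  -- Jensen as the monotonicity of `L^q` norms in `q` for the probability measure `μ / μ univ`.
  have h := eLpNorm'_le_eLpNorm'_of_exponent_le zero_lt_one hp ((μ univ)⁻¹ • μ)
    (hg.smul_measure _).aestronglyMeasurable
  simp only [eLpNorm', enorm_eq_self, ENNReal.rpow_one, div_one] at h
  rw [laverage_eq', laverage_eq']
  calc (∫⁻ x, g x ∂(μ univ)⁻¹ • μ) ^ p
      ≤ ((∫⁻ x, g x ^ p ∂(μ univ)⁻¹ • μ) ^ (1 / p)) ^ p := by gcongr
    _ = ∫⁻ x, g x ^ p ∂(μ univ)⁻¹ • μ := by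
      rw [← ENNReal.rpow_mul, one_div_mul_cancel hp0.ne', ENNReal.rpow_one]

theorem edist_average_le_laverage [CompleteSpace E] [IsFiniteMeasure μ] [NeZero μ] {f : α → E}
    (hf : Integrable f μ) (c : E) : edist (⨍ x, f x ∂μ) c ≤ ⨍⁻ x, edist (f x) c ∂μ := by
  have hf' : Integrable f ((μ univ)⁻¹ • μ) := hf.smul_measure (ENNReal.inv_ne_top.2 (NeZero.ne _))
  calc edist (⨍ x, f x ∂μ) c = ‖∫ x, (f x - c) ∂(μ univ)⁻¹ • μ‖ₑ := by
        rw [edist_eq_enorm_sub, average_eq', integral_sub hf' (integrable_const c),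
          integral_const, probReal_univ, one_smul]
    _ ≤ ⨍⁻ x, edist (f x) c ∂μ := by
        simpa only [laverage_eq', edist_eq_enorm_sub] using enorm_integral_le_lintegral_enorm _

theorem edist_setAverage_rpow_le [CompleteSpace E] (hp : 1 ≤ p) {A : Set α} (h0 : μ A ≠ 0)
    (hA : μ A ≠ ∞) {f : α → E} (hf : IntegrableOn f A μ) (c : E) :
    edist (⨍ x in A, f x ∂μ) c ^ p ≤ ⨍⁻ x in A, edist (f x) c ^ p ∂μ := by
  have : IsFiniteMeasure (μ.restrict A) := isFiniteMeasure_restrict.2 hA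
  have : NeZero (μ.restrict A) := ⟨by simpa using h0⟩
  calc edist (⨍ x in A, f x ∂μ) c ^ p ≤ (⨍⁻ x in A, edist (f x) c ∂μ) ^ p := by
        gcongr; exact edist_average_le_laverage hf c
    _ ≤ ⨍⁻ x in A, edist (f x) c ^ p ∂μ :=
        laverage_rpow_le hp ((continuous_id.edist continuous_const).comp_aestronglyMeasurable
          hf.aestronglyMeasurable).aemeasurable

theorem setLIntegral_edist_rpow_le {F : Type*} [PseudoEMetricSpace F] (hp : 1 ≤ p) (S : Set α)
    (f : α → F) (c c' : F) :
    ∫⁻ y in S, edist (f y) c ^ p ∂μ ≤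
      2 ^ (p - 1) * (∫⁻ y in S, edist (f y) c' ^ p ∂μ + μ S * edist c' c ^ p) :=
  calc ∫⁻ y in S, edist (f y) c ^ p ∂μ
      ≤ ∫⁻ y in S, 2 ^ (p - 1) * (edist (f y) c' ^ p + edist c' c ^ p) ∂μ :=
        lintegral_mono fun y => edist_rpow_le_two_rpow_mul hp _ _ _
    _ = 2 ^ (p - 1) * (∫⁻ y in S, edist (f y) c' ^ p ∂μ + μ S * edist c' c ^ p) := by
        rw [lintegral_const_mul' _ _ (by simp), lintegral_add_right' _ aemeasurable_const,
          setLIntegral_const, mul_comm (edist c' c ^ p)]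

variable (μ p) in
noncomputable def powOscillation (f : α → E) (A : Set α) : ℝ≥0∞ :=
  ∫⁻ y in A, edist (f y) (⨍ x in A, f x ∂μ) ^ p ∂μ

theorem powOscillation_le [CompleteSpace E] (hp : 1 ≤ p) {A : Set α} (h0 : μ A ≠ 0)
    (hA : μ A ≠ ∞) {f : α → E} (hf : IntegrableOn f A μ) :
    powOscillation μ p f A ≤ (μ A)⁻¹ * ∫⁻ y in A, ∫⁻ z in A, edist (f z) (f y) ^ p ∂μ ∂μ :=
  calc powOscillation μ p f A
      ≤ ∫⁻ y in A, (μ A)⁻¹ * ∫⁻ z in A, edist (f z) (f y) ^ p ∂μ ∂μ := by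
        refine lintegral_mono fun y => ?_
        rw [edist_comm, ← ENNReal.div_eq_inv_mul, ← setLAverage_eq]
        exact edist_setAverage_rpow_le hp h0 hA hf (f y)
    _ = (μ A)⁻¹ * ∫⁻ y in A, ∫⁻ z in A, edist (f z) (f y) ^ p ∂μ ∂μ :=
        lintegral_const_mul' _ _ (ENNReal.inv_ne_top.2 h0)

theorem edist_setAverage_setAverage_rpow_le (hp : 1 ≤ p) {A B : Set α}
    (h0 : μ (A ∩ B) ≠ 0) (hA : μ A ≠ ∞) {f : α → E} (hf : IntegrableOn f A μ) :
    edist (⨍ x in A, f x ∂μ) (⨍ x in B, f x ∂μ) ^ p ≤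
      2 ^ (p - 1) * (μ (A ∩ B))⁻¹ * (powOscillation μ p f A + powOscillation μ p f B) := by
  set a := ⨍ x in A, f x ∂μ
  set b := ⨍ x in B, f x ∂μ
  have hfin : μ (A ∩ B) ≠ ∞ := ne_top_of_le_ne_top hA (measure_mono inter_subset_left)
  have hmeas : AEMeasurable (fun y => edist (f y) a ^ p) (μ.restrict (A ∩ B)) :=
    ((continuous_id.edist continuous_const).comp_aestronglyMeasurable
      (hf.mono_set inter_subset_left).aestronglyMeasurable).aemeasurable.pow_const p
  have key : μ (A ∩ B) * edist a b ^ p ≤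
      2 ^ (p - 1) * (powOscillation μ p f A + powOscillation μ p f B) :=
    calc μ (A ∩ B) * edist a b ^ p = ∫⁻ _ in A ∩ B, edist a b ^ p ∂μ := by
          rw [setLIntegral_const, mul_comm]
      _ ≤ ∫⁻ y in A ∩ B, 2 ^ (p - 1) * (edist (f y) a ^ p + edist (f y) b ^ p) ∂μ := by
          refine lintegral_mono fun y => ?_
          rw [edist_comm (f y) a]
          exact edist_rpow_le_two_rpow_mul hp _ _ _
      _ = 2 ^ (p - 1) * (∫⁻ y in A ∩ B, edist (f y) a ^ p ∂μ +
            ∫⁻ y in A ∩ B, edist (f y) b ^ p ∂μ) := by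
          rw [lintegral_const_mul' _ _ (by simp), lintegral_add_left' hmeas]
      _ ≤ 2 ^ (p - 1) * (powOscillation μ p f A + powOscillation μ p f B) := by
          gcongr
          exacts [lintegral_mono_set inter_subset_left, lintegral_mono_set inter_subset_right]
  rw [mul_comm _ (μ (A ∩ B))⁻¹, mul_assoc]
  exact (ENNReal.mul_le_iff_le_inv h0 hfin).1 key

variable {ι : Type*} [Fintype ι] {B : ι → Set α}

theorem exists_edist_setAverage_rpow_le_of_reflTransGen (hp : 1 ≤ p) (hB : ∀ k, μ (B k) ≠ ∞)
    {i j : ι} (hij : Relation.ReflTransGen (fun i j => μ (B i ∩ B j) ≠ 0) i j) :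
    ∃ C ≠ ∞, ∀ f : α → E, (∀ k, IntegrableOn f (B k) μ) →
      edist (⨍ x in B i, f x ∂μ) (⨍ x in B j, f x ∂μ) ^ p ≤
        C * ∑ k, powOscillation μ p f (B k) := by
  induction hij with
  | refl => exact ⟨0, ENNReal.zero_ne_top, fun f _ => by simp [zero_lt_one.trans_le hp]⟩
  | @tail j k _ hjk ih =>
    obtain ⟨C, hC, hCf⟩ := ih
    refine ⟨2 ^ (p - 1) * (C + 2 ^ (p - 1) * (μ (B j ∩ B k))⁻¹ * 2), by finiteness, fun f hf => ?_⟩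
    have hosc : ∀ l, powOscillation μ p f (B l) ≤ ∑ k, powOscillation μ p f (B k) := fun l =>
      Finset.single_le_sum (f := fun k => powOscillation μ p f (B k)) (fun _ _ => zero_le)
        (Finset.mem_univ l)
    calc edist (⨍ x in B i, f x ∂μ) (⨍ x in B k, f x ∂μ) ^ p
        ≤ 2 ^ (p - 1) * (edist (⨍ x in B i, f x ∂μ) (⨍ x in B j, f x ∂μ) ^ p +
            edist (⨍ x in B j, f x ∂μ) (⨍ x in B k, f x ∂μ) ^ p) :=
          edist_rpow_le_two_rpow_mul hp _ _ _
      _ ≤ 2 ^ (p - 1) * (C * ∑ k, powOscillation μ p f (B k) +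
            2 ^ (p - 1) * (μ (B j ∩ B k))⁻¹ *
              (∑ k, powOscillation μ p f (B k) + ∑ k, powOscillation μ p f (B k))) := by
          gcongr
          · exact hCf f hf
          · refine (edist_setAverage_setAverage_rpow_le hp hjk (hB j) (hf j)).trans ?_
            gcongr <;> exact hosc _
      _ = 2 ^ (p - 1) * (C + 2 ^ (p - 1) * (μ (B j ∩ B k))⁻¹ * 2) *
            ∑ k, powOscillation μ p f (B k) := by ring

theorem exists_setLIntegral_iUnion_edist_setAverage_rpow_le (hp : 1 ≤ p)
    (hB : ∀ k, μ (B k) ≠ ∞)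
    (hconn : ∀ i j, Relation.ReflTransGen (fun i j => μ (B i ∩ B j) ≠ 0) i j) (i : ι) :
    ∃ C ≠ ∞, ∀ f : α → E, (∀ k, IntegrableOn f (B k) μ) →
      ∫⁻ y in ⋃ k, B k, edist (f y) (⨍ x in B i, f x ∂μ) ^ p ∂μ ≤
        C * ∑ k, powOscillation μ p f (B k) := by
  choose C hC hCf using fun k =>
    exists_edist_setAverage_rpow_le_of_reflTransGen (E := E) hp hB (hconn k i)
  refine ⟨∑ k, 2 ^ (p - 1) * (1 + μ (B k) * C k),
    ENNReal.sum_ne_top.2 fun k _ => by have := hB k; have := hC k; finiteness, fun f hf => ?_⟩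
  calc ∫⁻ y in ⋃ k, B k, edist (f y) (⨍ x in B i, f x ∂μ) ^ p ∂μ
      ≤ ∑ k, ∫⁻ y in B k, edist (f y) (⨍ x in B i, f x ∂μ) ^ p ∂μ :=
        (lintegral_iUnion_le _ _).trans_eq (tsum_fintype _)
    _ ≤ ∑ k, 2 ^ (p - 1) * (powOscillation μ p f (B k) +
          μ (B k) * (C k * ∑ k, powOscillation μ p f (B k))) := by
        gcongr with k
        refine (setLIntegral_edist_rpow_le hp _ f _ (⨍ x in B k, f x ∂μ)).trans ?_
        gcongr
        · rfl
        · exact hCf k f hf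
    _ ≤ (∑ k, 2 ^ (p - 1) * (1 + μ (B k) * C k)) * ∑ k, powOscillation μ p f (B k) := by
        rw [Finset.sum_mul]
        refine Finset.sum_le_sum fun k _ => ?_
        calc _ ≤ 2 ^ (p - 1) * (∑ k, powOscillation μ p f (B k) +
              μ (B k) * (C k * ∑ k, powOscillation μ p f (B k))) := by
              gcongr
              exact Finset.single_le_sum (f := fun k => powOscillation μ p f (B k))
                (fun _ _ => zero_le) (Finset.mem_univ k)
          _ = _ := by ring

theorem setLIntegral_edist_setAverage_rpow_le [CompleteSpace E] (hp : 1 ≤ p) {A S : Set α}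
    (hAS : A ⊆ S) (h0 : μ A ≠ 0) (hS : μ S ≠ ∞) {f : α → E} (hf : IntegrableOn f A μ) (c : E) :
    ∫⁻ y in S, edist (f y) (⨍ x in A, f x ∂μ) ^ p ∂μ ≤
      2 ^ (p - 1) * (1 + μ S * (μ A)⁻¹) * ∫⁻ y in S, edist (f y) c ^ p ∂μ := by
  set I := ∫⁻ y in S, edist (f y) c ^ p ∂μ
  have hA : μ A ≠ ∞ := ne_top_of_le_ne_top hS (measure_mono hAS)
  have hc : edist c (⨍ x in A, f x ∂μ) ^ p ≤ (μ A)⁻¹ * I :=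
    calc edist c (⨍ x in A, f x ∂μ) ^ p ≤ ⨍⁻ x in A, edist (f x) c ^ p ∂μ := by
          rw [edist_comm]; exact edist_setAverage_rpow_le hp h0 hA hf c
      _ ≤ (μ A)⁻¹ * I := by
          rw [setLAverage_eq, ENNReal.div_eq_inv_mul]
          gcongr
          exact lintegral_mono_set hAS
  calc ∫⁻ y in S, edist (f y) (⨍ x in A, f x ∂μ) ^ p ∂μ
      ≤ 2 ^ (p - 1) * (I + μ S * edist c (⨍ x in A, f x ∂μ) ^ p) :=
        setLIntegral_edist_rpow_le hp S f _ c
    _ ≤ 2 ^ (p - 1) * (I + μ S * ((μ A)⁻¹ * I)) := by gcongr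
    _ = 2 ^ (p - 1) * (1 + μ S * (μ A)⁻¹) * I := by ring

theorem exists_setLIntegral_iUnion_edist_setAverage_rpow_le_of_subset [CompleteSpace E]
    (hp : 1 ≤ p) (hB : ∀ k, μ (B k) ≠ ∞)
    (hconn : ∀ i j, Relation.ReflTransGen (fun i j => μ (B i ∩ B j) ≠ 0) i j)
    {A : Set α} (hA : A ⊆ ⋃ k, B k) (h0 : μ A ≠ 0) :
    ∃ C ≠ ∞, ∀ f : α → E, (∀ k, IntegrableOn f (B k) μ) →
      ∫⁻ y in ⋃ k, B k, edist (f y) (⨍ x in A, f x ∂μ) ^ p ∂μ ≤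
        C * ∑ k, powOscillation μ p f (B k) := by
  obtain ⟨i, -⟩ := mem_iUnion.1 (hA (nonempty_of_measure_ne_zero h0).some_mem)
  obtain ⟨C, hC, hCf⟩ := exists_setLIntegral_iUnion_edist_setAverage_rpow_le (E := E) hp hB hconn i
  have hU : μ (⋃ k, B k) ≠ ∞ := ((measure_iUnion_fintype_le μ B).trans_lt
    (ENNReal.sum_lt_top.2 fun k _ => (hB k).lt_top)).ne
  refine ⟨2 ^ (p - 1) * (1 + μ (⋃ k, B k) * (μ A)⁻¹) * C, by finiteness, fun f hf => ?_⟩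
  calc ∫⁻ y in ⋃ k, B k, edist (f y) (⨍ x in A, f x ∂μ) ^ p ∂μ
      ≤ 2 ^ (p - 1) * (1 + μ (⋃ k, B k) * (μ A)⁻¹) *
          ∫⁻ y in ⋃ k, B k, edist (f y) (⨍ x in B i, f x ∂μ) ^ p ∂μ :=
        setLIntegral_edist_setAverage_rpow_le hp hA h0 hU
          ((integrableOn_finite_iUnion.2 hf).mono_set hA) _
    _ ≤ 2 ^ (p - 1) * (1 + μ (⋃ k, B k) * (μ A)⁻¹) * (C * ∑ k, powOscillation μ p f (B k)) := by
        gcongr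
        exact hCf f hf
    _ = _ := by ring

end Average

theorem IsPreconnected.reflTransGen_inter_nonempty {X ι : Type*} [TopologicalSpace X]
    {s : ι → Set X} (hs : ∀ i, IsOpen (s i)) (hU : IsPreconnected (⋃ i, s i)) {i j : ι}
    (hi : (s i).Nonempty) (hj : (s j).Nonempty) :
    Relation.ReflTransGen (fun i j => (s i ∩ s j).Nonempty) i j := by
  set R := Relation.ReflTransGen (fun i j => (s i ∩ s j).Nonempty) i
  have hV : IsOpen (⋃ (k) (_ : R k), s k) := isOpen_biUnion fun k _ => hs k
  have hW : IsOpen (⋃ (k) (_ : ¬ R k), s k) := isOpen_biUnion fun k _ => hs k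
  have hcover : ⋃ k, s k ⊆ (⋃ (k) (_ : R k), s k) ∪ ⋃ (k) (_ : ¬ R k), s k := by
    refine iUnion_subset fun k => ?_
    by_cases hk : R k
    · exact (subset_biUnion_of_mem (u := s) hk).trans subset_union_left
    · exact (subset_biUnion_of_mem (u := s) hk).trans subset_union_right
  have hdisj : Disjoint (⋃ (k) (_ : R k), s k) (⋃ (k) (_ : ¬ R k), s k) := by
    simp only [disjoint_iUnion_left, disjoint_iUnion_right]
    intro k hk l hl
    exact disjoint_iff_inter_eq_empty.2 <| not_nonempty_iff_eq_empty.1 fun h => hk (hl.tail h)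
  have hsub : ⋃ k, s k ⊆ ⋃ (k) (_ : R k), s k := by
    refine (hU.subset_or_subset hV hW hdisj hcover).resolve_right fun h => ?_
    obtain ⟨y, hy⟩ := hi
    exact hdisj.ne_of_mem (mem_biUnion (Relation.ReflTransGen.refl) hy)
      (h (mem_iUnion_of_mem i hy)) rfl
  obtain ⟨y, hy⟩ := hj
  obtain ⟨k, hk, hyk⟩ := mem_iUnion₂.1 (hsub (mem_iUnion_of_mem j hy))
  exact hk.tail ⟨y, hyk, hy⟩

theorem edist_rpow_le_mul_div_dist_rpow {X : Type*} [MetricSpace X] {p e ρ : ℝ} (hp : 0 < p)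
    (he : 0 ≤ e) (f : X → ℝ) {y z : X} (hyz : dist y z ≤ ρ) :
    edist (f y) (f z) ^ p ≤
      ENNReal.ofReal (ρ ^ e) * ENNReal.ofReal (|f y - f z| ^ p / dist y z ^ e) := by
  rcases eq_or_ne y z with rfl | hne
  · simp [ENNReal.zero_rpow_of_pos hp]
  have hd : 0 < dist y z ^ e := Real.rpow_pos_of_pos (dist_pos.2 hne) e
  rw [edist_dist, Real.dist_eq, ENNReal.ofReal_rpow_of_nonneg (abs_nonneg _) hp.le,
    ← ENNReal.ofReal_mul (Real.rpow_nonneg (dist_nonneg.trans hyz) _)]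
  refine ENNReal.ofReal_le_ofReal ?_
  calc |f y - f z| ^ p = dist y z ^ e * (|f y - f z| ^ p / dist y z ^ e) := by field_simp
    _ ≤ ρ ^ e * (|f y - f z| ^ p / dist y z ^ e) := by gcongr

theorem setLIntegral_setLIntegral_edist_rpow_le {X : Type*} [MetricSpace X] [MeasurableSpace X]
    {μ : Measure X} {p e ρ : ℝ} (hp : 0 < p) (he : 0 ≤ e) {U A : Set X} {σ : X → ℝ≥0∞}
    (hA : MeasurableSet A) (hAU : A ⊆ U) (hdiam : ∀ y ∈ A, ∀ z ∈ A, dist z y ≤ ρ)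
    (hσ : ∀ y ∈ A, ENNReal.ofReal ρ < σ y) (f : X → ℝ) :
    ∫⁻ y in A, ∫⁻ z in A, edist (f z) (f y) ^ p ∂μ ∂μ ≤
      ENNReal.ofReal (ρ ^ e) * ∫⁻ y in U, ∫⁻ z in U ∩ {z | edist z y < σ y},
        ENNReal.ofReal (|f z - f y| ^ p / dist z y ^ e) ∂μ ∂μ := by
  have hinner : ∀ y ∈ A, ∫⁻ z in A, edist (f z) (f y) ^ p ∂μ ≤
      ENNReal.ofReal (ρ ^ e) * ∫⁻ z in U ∩ {z | edist z y < σ y},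
        ENNReal.ofReal (|f z - f y| ^ p / dist z y ^ e) ∂μ := by
    intro y hy
    rw [← lintegral_const_mul' _ _ ENNReal.ofReal_ne_top]
    refine (setLIntegral_mono' hA fun z hz =>
      edist_rpow_le_mul_div_dist_rpow hp he f (hdiam y hy z hz)).trans
      (lintegral_mono_set fun z hz => ⟨hAU hz, ?_⟩)
    change edist z y < σ y
    rw [edist_dist]
    exact (ENNReal.ofReal_le_ofReal (hdiam y hy z hz)).trans_lt (hσ y hy)
  calc ∫⁻ y in A, ∫⁻ z in A, edist (f z) (f y) ^ p ∂μ ∂μ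
      ≤ ∫⁻ y in A, ENNReal.ofReal (ρ ^ e) * ∫⁻ z in U ∩ {z | edist z y < σ y},
          ENNReal.ofReal (|f z - f y| ^ p / dist z y ^ e) ∂μ ∂μ := setLIntegral_mono' hA hinner
    _ ≤ ENNReal.ofReal (ρ ^ e) * ∫⁻ y in U, ∫⁻ z in U ∩ {z | edist z y < σ y},
          ENNReal.ofReal (|f z - f y| ^ p / dist z y ^ e) ∂μ ∂μ := by
        rw [lintegral_const_mul' _ _ ENNReal.ofReal_ne_top]
        gcongr

theorem powOscillation_ball_le {X : Type*} [MetricSpace X] [MeasurableSpace X]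
    [OpensMeasurableSpace X] {μ : Measure X} {p e : ℝ} (hp : 1 ≤ p) (he : 0 ≤ e) {U : Set X}
    {σ : X → ℝ≥0∞} {x : X} {r : ℝ} (h0 : μ (ball x r) ≠ 0) (hfin : μ (ball x r) ≠ ∞)
    (hU : ball x r ⊆ U) (hσ : ∀ y ∈ ball x r, ENNReal.ofReal (2 * r) < σ y) {f : X → ℝ}
    (hf : IntegrableOn f (ball x r) μ) :
    powOscillation μ p f (ball x r) ≤ (μ (ball x r))⁻¹ * ENNReal.ofReal ((2 * r) ^ e) *
      ∫⁻ y in U, ∫⁻ z in U ∩ {z | edist z y < σ y},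
        ENNReal.ofReal (|f z - f y| ^ p / dist z y ^ e) ∂μ ∂μ := by
  refine (powOscillation_le hp h0 hfin hf).trans ?_
  rw [mul_assoc]
  gcongr
  refine setLIntegral_setLIntegral_edist_rpow_le (zero_lt_one.trans_le hp) he measurableSet_ball
    hU (fun y hy z hz => ?_) hσ f
  linarith [dist_triangle_right z y x, mem_ball.1 hy, mem_ball.1 hz]

theorem ENNReal.exists_pos_rpow_le_ofReal_mul {C : ℝ≥0∞} (hC : C ≠ ∞) {q : ℝ} (hq : 0 ≤ q) :
    ∃ c : ℝ, 0 < c ∧ ∀ a b : ℝ≥0∞, a ≤ C * b → a ^ q ≤ ENNReal.ofReal c * b ^ q := by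
  refine ⟨(C ^ q).toReal + 1, by positivity, fun a b hab => ?_⟩
  calc a ^ q ≤ C ^ q * b ^ q := by
        rw [← ENNReal.mul_rpow_of_nonneg _ _ hq]; exact ENNReal.rpow_le_rpow hab hq
    _ ≤ ENNReal.ofReal ((C ^ q).toReal + 1) * b ^ q := by
        gcongr
        exact (ENNReal.le_ofReal_iff_toReal_le (ENNReal.rpow_ne_top_of_nonneg hq hC)
          (by positivity)).2 (by linarith)

theorem statement7_general (N : ℕ) (U : Set (EuclideanSpace ℝ (Fin N)))
    (hUc : IsConnected U)
    (p s : ℝ) (hp : 1 ≤ p) (hs0 : 0 < s)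
    (σ : EuclideanSpace ℝ (Fin N) → ℝ≥0∞)
    (m : ℕ) (x : Fin m → EuclideanSpace ℝ (Fin N)) (r : Fin m → ℝ)
    (hr : ∀ n, 0 < r n)
    (hball : ∀ n, Metric.ball (x n) (2 * r n) ⊆ U)
    (hsmall : ∀ n, ∀ y ∈ Metric.ball (x n) (r n), ENNReal.ofReal (2 * r n) < σ y)
    (hcover : U = ⋃ n, Metric.ball (x n) (r n))
    (E : Set (EuclideanSpace ℝ (Fin N))) (hEU : E ⊆ U)
    (hEpos : 0 < volume E) :
    ∃ c : ℝ, 0 < c ∧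
      ∀ f : EuclideanSpace ℝ (Fin N) → ℝ, LocallyIntegrableOn f U →
        (∫⁻ y in U,
            ENNReal.ofReal (|f y - (∫ z in E, f z) / (volume E).toReal| ^ p)) ^ (1 / p)
          ≤ ENNReal.ofReal c * screenedSeminorm N s p U σ f := by
  have hp0 : 0 < p := zero_lt_one.trans_le hp
  set B : Fin m → Set (EuclideanSpace ℝ (Fin N)) := fun n => ball (x n) (r n)
  set energy : (EuclideanSpace ℝ (Fin N) → ℝ) → ℝ≥0∞ := fun f =>
    ∫⁻ y in U, ∫⁻ z in U ∩ {z | edist z y < σ y},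
      ENNReal.ofReal (|f z - f y| ^ p / dist z y ^ (s * p + N))
  set K : Fin m → ℝ≥0∞ := fun n => (volume (B n))⁻¹ * ENNReal.ofReal ((2 * r n) ^ (s * p + N))
  have hconn : ∀ i j, Relation.ReflTransGen (fun i j => volume (B i ∩ B j) ≠ 0) i j :=
    fun i j => Relation.ReflTransGen.mono
      (fun _ _ h => (isOpen_ball.inter isOpen_ball).measure_ne_zero volume h) i j
      (IsPreconnected.reflTransGen_inter_nonempty (fun _ => isOpen_ball)
        (hcover ▸ hUc.isPreconnected) (nonempty_ball.2 (hr i)) (nonempty_ball.2 (hr j)))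
  obtain ⟨C, hC, hCf⟩ := exists_setLIntegral_iUnion_edist_setAverage_rpow_le_of_subset (E := ℝ) hp
    (fun n => measure_ball_lt_top.ne) hconn (hcover ▸ hEU) hEpos.ne'
  have hK : C * ∑ n, K n ≠ ∞ := ENNReal.mul_ne_top hC <| ENNReal.sum_ne_top.2 fun n _ =>
    ENNReal.mul_ne_top (ENNReal.inv_ne_top.2 (measure_ball_pos volume (x n) (hr n)).ne')
      ENNReal.ofReal_ne_top
  obtain ⟨c, hc, hcf⟩ := ENNReal.exists_pos_rpow_le_ofReal_mul hK (one_div_nonneg.2 hp0.le)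
  refine ⟨c, hc, fun f hf => hcf _ (energy f) ?_⟩
  have hfB : ∀ n, IntegrableOn f (B n) := fun n =>
    (hf.integrableOn_compact_subset ((closedBall_subset_ball (by linarith [hr n])).trans (hball n))
      (isCompact_closedBall _ _)).mono_set ball_subset_closedBall
  have hosc : ∀ n, powOscillation volume p f (B n) ≤ K n * energy f := fun n =>
    powOscillation_ball_le hp (by positivity) (measure_ball_pos volume (x n) (hr n)).ne'
      measure_ball_lt_top.ne ((ball_subset_ball (by linarith [hr n])).trans (hball n))
      (hsmall n) (hfB n)
  calc ∫⁻ y in U, ENNReal.ofReal (|f y - (∫ z in E, f z) / (volume E).toReal| ^ p)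
      = ∫⁻ y in ⋃ n, B n, edist (f y) (⨍ z in E, f z) ^ p := by
        rw [← hcover, setAverage_eq, measureReal_def, smul_eq_mul, inv_mul_eq_div]
        simp only [edist_dist, Real.dist_eq, ENNReal.ofReal_rpow_of_nonneg (abs_nonneg _) hp0.le]
    _ ≤ C * ∑ n, powOscillation volume p f (B n) := hCf f hfB
    _ ≤ C * ∑ n, K n * energy f := by gcongr with n; exact hosc n
    _ = C * (∑ n, K n) * energy f := by rw [mul_assoc, Finset.sum_mul]

/-- Poincaré inequality on a connected union of finitely many small
balls.  Let `U ⊆ ℝ^N` be open and connected, `1 ≤ p < ∞`, `0 < s < 1`, `σ` a screening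
function on `U`.  Suppose `U = ⋃_{n=1}^m B(x_n, r_n)` where each `r_n` satisfies the
conclusion of Lemma `screening radius`: `0 < r_n < σ(x_n)`, `B(x_n, 2 r_n) ⊆ U` and
`2 r_n < σ(y)` for `y ∈ B(x_n, r_n)`.  Then for every measurable `E ⊆ U` with
`𝓛^N(E) > 0` there exists `c = c(U,E,p,s) > 0` with
`‖f - f_E‖_{L^p(U)} ≤ c |f|_{W̃^{s,p}_{(σ)}(U)}` for all `f ∈ L¹_loc(U)`. -/
theorem statement7 (N : ℕ) (U : Set (EuclideanSpace ℝ (Fin N)))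
    (hUo : IsOpen U) (hUc : IsConnected U)
    (p s : ℝ) (hp : 1 ≤ p) (hs0 : 0 < s) (hs1 : s < 1)
    (σ : EuclideanSpace ℝ (Fin N) → ℝ≥0∞)
    (hσlsc : LowerSemicontinuousOn σ U) (hσpos : ∀ x ∈ U, 0 < σ x)
    (m : ℕ) (x : Fin m → EuclideanSpace ℝ (Fin N)) (r : Fin m → ℝ)
    (hr : ∀ n, 0 < r n) (hrσ : ∀ n, ENNReal.ofReal (r n) < σ (x n))
    (hball : ∀ n, Metric.ball (x n) (2 * r n) ⊆ U)
    (hsmall : ∀ n, ∀ y ∈ Metric.ball (x n) (r n), ENNReal.ofReal (2 * r n) < σ y)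
    (hcover : U = ⋃ n, Metric.ball (x n) (r n))
    (E : Set (EuclideanSpace ℝ (Fin N))) (hEU : E ⊆ U) (hEm : MeasurableSet E)
    (hEpos : 0 < volume E) :
    ∃ c : ℝ, 0 < c ∧
      ∀ f : EuclideanSpace ℝ (Fin N) → ℝ, LocallyIntegrableOn f U →
        (∫⁻ y in U,
            ENNReal.ofReal (|f y - (∫ z in E, f z) / (volume E).toReal| ^ p)) ^ (1 / p)
          ≤ ENNReal.ofReal c * screenedSeminorm N s p U σ f :=
  statement7_general N U hUc p s hp hs0 σ m x r hr hball hsmall hcover E hEU hEpos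
end

section
/- Let U ⊆ ℝ^N be open, 1 ≤ p < ∞, 0 < s < 1, and let σ : U → (0,∞] be a screening function with σ_− := inf_U σ > 0. Then there exists a constant c = c(N, s, p, σ_−) > 0 such that for every f ∈ L¹_loc(U): ‖f‖_{L^p(U)} + |f|_{W̃^{s,p}_{(σ)}(U)} ≤ ‖f‖_{L^p(U)} + |f|_{Ẇ^{s,p}(U)} ≤ c (‖f‖_{L^p(U)} + |f|_{W̃^{s,p}_{(σ)}(U)}). -/
/-!
Split the inner integral at distance `σ₋`. Near the diagonal, `B(x, σ₋) ⊆ B(x, σ(x))`, so that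
part is dominated by the screened seminorm. Away from it,
`|f(y) - f(x)|^p ≤ 2^{p-1}(|f(x)|^p + |f(y)|^p)`, and what remains is the convolution of `|f|^p`
with the even kernel `|z|^{-(sp+N)} 1_{|z| ≥ σ₋}`, which is integrable because `sp + N > N`.
Hence `|f|^p_{Ẇ^{s,p}} ≤ |f|^p_{W̃^{s,p}_{(σ)}} + K ‖f‖^p_{L^p}`, and the claim follows by taking
`p`-th roots.
-/

open MeasureTheory Metric
open scoped ENNReal

/-- The `L^p(U)` norm of `f`, valued in `ℝ≥0∞`. -/
noncomputable def lpNormOn (N : ℕ) (p : ℝ) (U : Set (EuclideanSpace ℝ (Fin N)))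
    (f : EuclideanSpace ℝ (Fin N) → ℝ) : ℝ≥0∞ :=
  (∫⁻ x in U, ENNReal.ofReal (|f x| ^ p)) ^ (1 / p)

open Set Module

section TailKernel

variable {E : Type*} [NormedAddCommGroup E]

noncomputable def tailKernel (α r : ℝ) (z : E) : ℝ≥0∞ :=
  {z : E | r ≤ ‖z‖}.indicator (fun z => ENNReal.ofReal ((‖z‖ ^ α)⁻¹)) z

lemma tailKernel_neg (α r : ℝ) (z : E) : tailKernel α r (-z) = tailKernel α r z := by
  simp [tailKernel, indicator]

lemma tailKernel_sub_of_le {α r : ℝ} {x y : E} (h : r ≤ dist y x) :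
    tailKernel α r (y - x) = ENNReal.ofReal ((dist y x ^ α)⁻¹) := by
  rw [dist_eq_norm] at h ⊢
  exact indicator_of_mem (s := {z : E | r ≤ ‖z‖}) h _

lemma measurable_tailKernel [MeasurableSpace E] [BorelSpace E] (α r : ℝ) :
    Measurable (tailKernel (E := E) α r) :=
  Measurable.indicator (by fun_prop) (measurableSet_le measurable_const measurable_norm)

lemma tailKernel_le_one_add_norm_rpow {α r : ℝ} (hr : 0 < r) (hα : 0 ≤ α) (z : E) :
    tailKernel α r z ≤ ENNReal.ofReal ((1 + r⁻¹) ^ α * (1 + ‖z‖) ^ (-α)) := by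
  by_cases hz : r ≤ ‖z‖
  · rw [tailKernel, indicator_of_mem (s := {z : E | r ≤ ‖z‖}) hz]
    refine ENNReal.ofReal_le_ofReal ?_
    have hz0 : 0 < ‖z‖ := hr.trans_le hz
    have hle : (1 + ‖z‖) / (1 + r⁻¹) ≤ ‖z‖ := by
      rw [div_le_iff₀ (by positivity), mul_add, mul_one, add_comm]
      gcongr
      rwa [le_mul_inv_iff₀ hr, one_mul]
    calc (‖z‖ ^ α)⁻¹ = ‖z‖ ^ (-α) := (Real.rpow_neg hz0.le α).symm
      _ ≤ ((1 + ‖z‖) / (1 + r⁻¹)) ^ (-α) :=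
          Real.rpow_le_rpow_of_nonpos (by positivity) hle (neg_nonpos.mpr hα)
      _ = (1 + r⁻¹) ^ α * (1 + ‖z‖) ^ (-α) := by
          rw [Real.div_rpow (by positivity) (by positivity), Real.rpow_neg (by positivity),
            Real.rpow_neg (by positivity)]
          field_simp
  · simp [tailKernel, hz]

lemma lintegral_tailKernel_lt_top [NormedSpace ℝ E] [FiniteDimensional ℝ E] [MeasurableSpace E]
    [BorelSpace E] (μ : Measure E) [μ.IsAddHaarMeasure] {α r : ℝ} (hr : 0 < r)
    (hα : (finrank ℝ E : ℝ) < α) : ∫⁻ z, tailKernel α r z ∂μ < ∞ := by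
  have hα0 : 0 ≤ α := (Nat.cast_nonneg _).trans hα.le
  calc ∫⁻ z, tailKernel α r z ∂μ
      ≤ ∫⁻ z, ENNReal.ofReal ((1 + r⁻¹) ^ α) * ENNReal.ofReal ((1 + ‖z‖) ^ (-α)) ∂μ := by
        refine lintegral_mono fun z => ?_
        rw [← ENNReal.ofReal_mul (by positivity)]
        exact tailKernel_le_one_add_norm_rpow hr hα0 z
    _ = ENNReal.ofReal ((1 + r⁻¹) ^ α) * ∫⁻ z, ENNReal.ofReal ((1 + ‖z‖) ^ (-α)) ∂μ :=
        lintegral_const_mul _ (by fun_prop)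
    _ < ∞ := ENNReal.mul_lt_top ENNReal.ofReal_lt_top (finite_integral_one_add_norm hα)

end TailKernel

section EvenKernel

variable {E : Type*} [NormedAddCommGroup E] [MeasurableSpace E] [BorelSpace E]
  [SecondCountableTopology E] {μ : Measure E} [SFinite μ] [μ.IsAddRightInvariant]

/-- A Schur test for an even, translation-invariant kernel. -/
lemma lintegral_lintegral_add_mul_le {U : Set E} {A k : E → ℝ≥0∞} (hA : Measurable A)
    (hk : Measurable k) (hk_even : ∀ z, k (-z) = k z) :
    ∫⁻ x in U, ∫⁻ y in U, (A x + A y) * k (y - x) ∂μ ∂μ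
      ≤ 2 * (∫⁻ z, k z ∂μ) * ∫⁻ x in U, A x ∂μ := by
  have hmeas : Measurable (Function.uncurry fun x y : E => A x * k (y - x)) := by fun_prop
  have hswap : ∫⁻ x in U, ∫⁻ y in U, A y * k (y - x) ∂μ ∂μ
      = ∫⁻ x in U, ∫⁻ y in U, A x * k (y - x) ∂μ ∂μ := by
    rw [lintegral_lintegral_swap (by fun_prop)]
    refine lintegral_congr fun x => lintegral_congr fun y => ?_
    rw [← neg_sub, hk_even]
  have hhalf : ∫⁻ x in U, ∫⁻ y in U, A x * k (y - x) ∂μ ∂μ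
      ≤ (∫⁻ z, k z ∂μ) * ∫⁻ x in U, A x ∂μ := by
    calc ∫⁻ x in U, ∫⁻ y in U, A x * k (y - x) ∂μ ∂μ
        = ∫⁻ x in U, A x * ∫⁻ y in U, k (y - x) ∂μ ∂μ := by
          refine lintegral_congr fun x => lintegral_const_mul _ (by fun_prop)
      _ ≤ ∫⁻ x in U, A x * ∫⁻ z, k z ∂μ ∂μ := by
          refine lintegral_mono fun x => mul_le_mul_right ?_ _
          exact (setLIntegral_le_lintegral _ _).trans (lintegral_sub_right_eq_self k x).le
      _ = (∫⁻ z, k z ∂μ) * ∫⁻ x in U, A x ∂μ := by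
          rw [lintegral_mul_const _ hA, mul_comm]
  calc ∫⁻ x in U, ∫⁻ y in U, (A x + A y) * k (y - x) ∂μ ∂μ
      = ∫⁻ x in U, ∫⁻ y in U, A x * k (y - x) ∂μ ∂μ
          + ∫⁻ x in U, ∫⁻ y in U, A y * k (y - x) ∂μ ∂μ := by
        simp_rw [add_mul]
        rw [← lintegral_add_left (hmeas.lintegral_prod_right)]
        refine lintegral_congr fun x => lintegral_add_left (by fun_prop) _
    _ ≤ 2 * (∫⁻ z, k z ∂μ) * ∫⁻ x in U, A x ∂μ := by
        rw [hswap, ← two_mul, mul_assoc]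
        exact mul_le_mul_right hhalf 2

end EvenKernel

lemma ofReal_abs_sub_rpow_le {p : ℝ} (hp : 1 ≤ p) (a b : ℝ) :
    ENNReal.ofReal (|a - b| ^ p)
      ≤ 2 ^ (p - 1) * (ENNReal.ofReal (|a| ^ p) + ENNReal.ofReal (|b| ^ p)) := by
  have hp0 : 0 ≤ p := zero_le_one.trans hp
  simp only [← ENNReal.ofReal_rpow_of_nonneg (abs_nonneg _) hp0]
  calc ENNReal.ofReal |a - b| ^ p ≤ (ENNReal.ofReal |a| + ENNReal.ofReal |b|) ^ p := by
        gcongr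
        rw [← ENNReal.ofReal_add (abs_nonneg _) (abs_nonneg _)]
        exact ENNReal.ofReal_le_ofReal (abs_sub _ _)
    _ ≤ 2 ^ (p - 1) * (ENNReal.ofReal |a| ^ p + ENNReal.ofReal |b| ^ p) :=
        ENNReal.rpow_add_le_mul_rpow_add_rpow _ _ hp

section DifferenceQuotient

variable {E : Type*} [NormedAddCommGroup E] {f : E → ℝ} {p α r : ℝ}

lemma ofReal_diffQuotient_le_tailKernel (hp : 1 ≤ p) {x y : E} (hxy : r ≤ dist y x) :
    ENNReal.ofReal (|f y - f x| ^ p / dist y x ^ α)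
      ≤ 2 ^ (p - 1) * ((ENNReal.ofReal (|f x| ^ p) + ENNReal.ofReal (|f y| ^ p))
          * tailKernel α r (y - x)) := by
  rw [tailKernel_sub_of_le hxy, div_eq_mul_inv,
    ENNReal.ofReal_mul (Real.rpow_nonneg (abs_nonneg _) p), ← mul_assoc, abs_sub_comm]
  exact mul_le_mul_left (ofReal_abs_sub_rpow_le hp _ _) _

variable [MeasurableSpace E] [BorelSpace E] {μ : Measure E} {U : Set E}

lemma setLIntegral_diffQuotient_le (hU : MeasurableSet U) (hp : 1 ≤ p) {σ : E → ℝ≥0∞} {x : E}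
    (hσx : ENNReal.ofReal r ≤ σ x) :
    ∫⁻ y in U, ENNReal.ofReal (|f y - f x| ^ p / dist y x ^ α) ∂μ
      ≤ ∫⁻ y in U ∩ {y | edist y x < σ x}, ENNReal.ofReal (|f y - f x| ^ p / dist y x ^ α) ∂μ
        + ∫⁻ y in U, 2 ^ (p - 1) * ((ENNReal.ofReal (|f x| ^ p) + ENNReal.ofReal (|f y| ^ p))
            * tailKernel α r (y - x)) ∂μ := by
  rw [← lintegral_inter_add_sdiff _ U (measurableSet_ball (x := x) (ε := r))]
  gcongr ?_ + ?_
  · refine lintegral_mono_set fun y ⟨hyU, hy⟩ => ⟨hyU, ?_⟩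
    exact (edist_lt_ofReal.mpr (mem_ball.mp hy)).trans_le hσx
  · refine (setLIntegral_mono' (hU.diff measurableSet_ball) fun y hy => ?_).trans
      (lintegral_mono_set sdiff_subset)
    exact ofReal_diffQuotient_le_tailKernel hp (not_lt.mp hy.2)

lemma lintegral_lintegral_diffQuotient_le [SecondCountableTopology E] [SFinite μ]
    [μ.IsAddRightInvariant] (hU : MeasurableSet U) (hp : 1 ≤ p) (hf : Measurable f)
    {σ : E → ℝ≥0∞} (hσ : ∀ x ∈ U, ENNReal.ofReal r ≤ σ x) :
    ∫⁻ x in U, ∫⁻ y in U, ENNReal.ofReal (|f y - f x| ^ p / dist y x ^ α) ∂μ ∂μ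
      ≤ ∫⁻ x in U, ∫⁻ y in U ∩ {y | edist y x < σ x},
            ENNReal.ofReal (|f y - f x| ^ p / dist y x ^ α) ∂μ ∂μ
        + 2 ^ p * (∫⁻ z, tailKernel α r z ∂μ) * ∫⁻ x in U, ENNReal.ofReal (|f x| ^ p) ∂μ := by
  set A : E → ℝ≥0∞ := fun x => ENNReal.ofReal (|f x| ^ p)
  have hA : Measurable A := by fun_prop
  have hk := measurable_tailKernel (E := E) α r
  calc ∫⁻ x in U, ∫⁻ y in U, ENNReal.ofReal (|f y - f x| ^ p / dist y x ^ α) ∂μ ∂μ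
      ≤ ∫⁻ x in U, (∫⁻ y in U ∩ {y | edist y x < σ x},
            ENNReal.ofReal (|f y - f x| ^ p / dist y x ^ α) ∂μ
          + ∫⁻ y in U, 2 ^ (p - 1) * ((A x + A y) * tailKernel α r (y - x)) ∂μ) ∂μ :=
        setLIntegral_mono' hU fun x hx => setLIntegral_diffQuotient_le hU hp (hσ x hx)
    _ = ∫⁻ x in U, ∫⁻ y in U ∩ {y | edist y x < σ x},
            ENNReal.ofReal (|f y - f x| ^ p / dist y x ^ α) ∂μ ∂μ
          + 2 ^ (p - 1) * ∫⁻ x in U, ∫⁻ y in U, (A x + A y) * tailKernel α r (y - x) ∂μ ∂μ := by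
        have hT : Measurable fun x => ∫⁻ y in U, (A x + A y) * tailKernel α r (y - x) ∂μ :=
          Measurable.lintegral_prod_right (f := fun x y => (A x + A y) * tailKernel α r (y - x))
            (by fun_prop)
        rw [← lintegral_const_mul _ hT, ← lintegral_add_right _ (hT.const_mul _)]
        refine lintegral_congr fun x => ?_
        rw [lintegral_const_mul _ (by fun_prop)]
    _ ≤ _ := by
        refine add_le_add_right ?_ _
        calc 2 ^ (p - 1) * ∫⁻ x in U, ∫⁻ y in U, (A x + A y) * tailKernel α r (y - x) ∂μ ∂μ
            ≤ 2 ^ (p - 1) * (2 * (∫⁻ z, tailKernel α r z ∂μ) * ∫⁻ x in U, A x ∂μ) := by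
              gcongr
              exact lintegral_lintegral_add_mul_le hA hk (tailKernel_neg α r)
          _ = 2 ^ p * (∫⁻ z, tailKernel α r z ∂μ) * ∫⁻ x in U, A x ∂μ := by
              have h2 : (2 : ℝ≥0∞) ^ (p - 1) * 2 = 2 ^ p := by
                conv_rhs => rw [← sub_add_cancel p 1,
                  ENNReal.rpow_add _ _ two_ne_zero ENNReal.ofNat_ne_top, ENNReal.rpow_one]
              rw [← mul_assoc, ← mul_assoc, h2]

end DifferenceQuotient

lemma ENNReal.add_rpow_le_mul_of_le_add {q : ℝ} (hq0 : 0 ≤ q) (hq1 : q ≤ 1) {F S K L : ℝ≥0∞}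
    (h : F ≤ S + K * L) : L ^ q + F ^ q ≤ (1 + K ^ q) * (L ^ q + S ^ q) :=
  calc L ^ q + F ^ q ≤ L ^ q + (S ^ q + K ^ q * L ^ q) := by
        gcongr
        rw [← ENNReal.mul_rpow_of_nonneg _ _ hq0]
        exact (ENNReal.rpow_le_rpow h hq0).trans (ENNReal.rpow_add_le_add_rpow _ _ hq0 hq1)
    _ ≤ (1 + K ^ q) * (L ^ q + S ^ q) := by
        rw [add_mul, one_mul, mul_add, ← add_assoc]
        exact add_le_add_right le_self_add _

section FractionalSobolev

variable {N : ℕ} {s p : ℝ} {U : Set (EuclideanSpace ℝ (Fin N))} {f g : EuclideanSpace ℝ (Fin N) → ℝ}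

lemma screenedSeminorm_mono (hp : 0 ≤ p) {σ τ : EuclideanSpace ℝ (Fin N) → ℝ≥0∞}
    (hστ : ∀ x, σ x ≤ τ x) : screenedSeminorm N s p U σ f ≤ screenedSeminorm N s p U τ f :=
  ENNReal.rpow_le_rpow (lintegral_mono fun x =>
    lintegral_mono_set (inter_subset_inter_right _ fun _ hy => lt_of_lt_of_le hy (hστ x)))
    (by positivity)

lemma screenedSeminorm_top :
    screenedSeminorm N s p U (fun _ => ⊤) f
      = (∫⁻ x in U, ∫⁻ y in U, ENNReal.ofReal (|f y - f x| ^ p / dist y x ^ (s * p + N)))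
          ^ (1 / p) := by
  simp [screenedSeminorm, edist_lt_top]

lemma screenedSeminorm_congr_ae {σ : EuclideanSpace ℝ (Fin N) → ℝ≥0∞}
    (h : f =ᵐ[volume.restrict U] g) :
    screenedSeminorm N s p U σ f = screenedSeminorm N s p U σ g := by
  unfold screenedSeminorm
  congr 1
  refine lintegral_congr_ae ?_
  filter_upwards [h] with x hx
  refine lintegral_congr_ae ?_
  filter_upwards [ae_restrict_of_ae_restrict_of_subset inter_subset_left h] with y hy
  rw [hx, hy]

lemma lpNormOn_congr_ae (h : f =ᵐ[volume.restrict U] g) : lpNormOn N p U f = lpNormOn N p U g := by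
  unfold lpNormOn
  congr 1
  refine lintegral_congr_ae ?_
  filter_upwards [h] with x hx
  rw [hx]

lemma lpNormOn_add_screenedSeminorm_top_le (hU : MeasurableSet U) (hp : 1 ≤ p) {r : ℝ}
    {σ : EuclideanSpace ℝ (Fin N) → ℝ≥0∞} (hσ : ∀ x ∈ U, ENNReal.ofReal r ≤ σ x)
    (hf : AEStronglyMeasurable f (volume.restrict U)) :
    lpNormOn N p U f + screenedSeminorm N s p U (fun _ => ⊤) f
      ≤ (1 + (2 ^ p * ∫⁻ z, tailKernel (E := EuclideanSpace ℝ (Fin N)) (s * p + N) r z) ^ (1 / p))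
          * (lpNormOn N p U f + screenedSeminorm N s p U σ f) := by
  rw [lpNormOn_congr_ae hf.ae_eq_mk, screenedSeminorm_congr_ae hf.ae_eq_mk,
    screenedSeminorm_congr_ae hf.ae_eq_mk, screenedSeminorm_top]
  refine ENNReal.add_rpow_le_mul_of_le_add (by positivity)
    ((div_le_one (by linarith)).mpr hp) ?_
  exact lintegral_lintegral_diffQuotient_le hU hp hf.stronglyMeasurable_mk.measurable hσ

end FractionalSobolev

theorem statement10_general (N : ℕ) (U : Set (EuclideanSpace ℝ (Fin N))) (hU : IsOpen U)
    (p s : ℝ) (hp : 1 ≤ p) (hs0 : 0 < s)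
    (σ : EuclideanSpace ℝ (Fin N) → ℝ≥0∞)
    (σm : ℝ) (hσm : 0 < σm) (hσlb : ∀ x ∈ U, ENNReal.ofReal σm ≤ σ x) :
    ∃ c : ℝ, 0 < c ∧
      ∀ f : EuclideanSpace ℝ (Fin N) → ℝ, LocallyIntegrableOn f U →
        (lpNormOn N p U f + screenedSeminorm N s p U σ f
            ≤ lpNormOn N p U f + screenedSeminorm N s p U (fun _ => ⊤) f) ∧
        (lpNormOn N p U f + screenedSeminorm N s p U (fun _ => ⊤) f
            ≤ ENNReal.ofReal c *
              (lpNormOn N p U f + screenedSeminorm N s p U σ f)) := by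
  set K : ℝ≥0∞ := 2 ^ p * ∫⁻ z, tailKernel (E := EuclideanSpace ℝ (Fin N)) (s * p + N) σm z
  have hp0 : 0 < p := zero_lt_one.trans_le hp
  have hK : K ^ (1 / p) ≠ ∞ := by
    have hdim : (finrank ℝ (EuclideanSpace ℝ (Fin N)) : ℝ) < s * p + N := by
      rw [finrank_euclideanSpace_fin]
      nlinarith
    refine ENNReal.rpow_ne_top_of_nonneg (by positivity) (ENNReal.mul_ne_top ?_
      (lintegral_tailKernel_lt_top volume hσm hdim).ne)
    exact ENNReal.rpow_ne_top_of_nonneg hp0.le ENNReal.ofNat_ne_top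
  refine ⟨1 + (K ^ (1 / p)).toReal, by positivity, fun f hf => ⟨?_, ?_⟩⟩
  · exact add_le_add_right (screenedSeminorm_mono hp0.le fun _ => le_top) _
  · rw [ENNReal.ofReal_add zero_le_one ENNReal.toReal_nonneg, ENNReal.ofReal_one,
      ENNReal.ofReal_toReal hK]
    exact lpNormOn_add_screenedSeminorm_top_le hU.measurableSet hp hσlb hf.aestronglyMeasurable

/-- Let `U ⊆ ℝ^N` be open, `1 ≤ p < ∞`, `0 < s < 1`, and `σ` a
screening function bounded below by `σ₋ > 0` on `U`.  Then there is
`c = c(N,s,p,σ₋) > 0` such that for every `f ∈ L¹_loc(U)`: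
`‖f‖_{L^p(U)} + |f|_{W̃^{s,p}_{(σ)}(U)} ≤ ‖f‖_{L^p(U)} + |f|_{Ẇ^{s,p}(U)}
  ≤ c (‖f‖_{L^p(U)} + |f|_{W̃^{s,p}_{(σ)}(U)})`. -/
theorem statement10 (N : ℕ) (U : Set (EuclideanSpace ℝ (Fin N))) (hU : IsOpen U)
    (p s : ℝ) (hp : 1 ≤ p) (hs0 : 0 < s) (hs1 : s < 1)
    (σ : EuclideanSpace ℝ (Fin N) → ℝ≥0∞)
    (hσlsc : LowerSemicontinuousOn σ U) (hσpos : ∀ x ∈ U, 0 < σ x)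
    (σm : ℝ) (hσm : 0 < σm) (hσlb : ∀ x ∈ U, ENNReal.ofReal σm ≤ σ x) :
    ∃ c : ℝ, 0 < c ∧
      ∀ f : EuclideanSpace ℝ (Fin N) → ℝ, LocallyIntegrableOn f U →
        (lpNormOn N p U f + screenedSeminorm N s p U σ f
            ≤ lpNormOn N p U f + screenedSeminorm N s p U (fun _ => ⊤) f) ∧
        (lpNormOn N p U f + screenedSeminorm N s p U (fun _ => ⊤) f
            ≤ ENNReal.ofReal c *
              (lpNormOn N p U f + screenedSeminorm N s p U σ f)) :=
  statement10_general N U hU p s hp hs0 σ σm hσm hσlb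
end
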